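/- Let M ≥ 1 and let G be a connected simple graph on Fin M. Define sgn₋ : ℝ → ℝ by sgn₋(y) = −1 if y < 0 and sgn₋(y) = 0 if y ≥ 0. Let x : ℝ → Fin M → ℝ be such that each x_i is continuous and satisfies, for all t ≥ 0, x_i(t) = x_i(0) + ∫₀ᵗ sgn₋( Σ_{j ∈ N(i)} (x_j(s) − x_i(s)) ) ds, where N(i) is the neighborhood of i in G. Then the states reach the minimum of the initial conditions in finite time: there exists T ≥ 0 such that for all t ≥ T and all i, x_i(t) = min_j x_j(0). (Proposition 3 of the paper, applied to the estimates ā_{max,i} of the minimum of the maximum accelerations: min-consensus in finite time.) -/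

import Mathlib

/-!
The minimum `v t = minᵢ xᵢ t` of the states is Lipschitz, hence absolutely continuous. At almost
every time each `xᵢ` is differentiable with derivative `sgn₋(∑ⱼ (xⱼ - xᵢ))`, and an agent attaining
the minimum has no neighbour below it, so its rate vanishes; touching `v` from above, it forces
`v' = 0`. Thus `v ≡ m := minᵢ xᵢ 0`. Afterwards, as long as the states are not all equal to `m`,
a maximal agent with a lower neighbour moves at rate `-1`, so the nonnegative quantity
`∑ᵢ (xᵢ - m)` decreases at rate at least one and consensus at `m` is reached by time
`∑ᵢ (xᵢ 0 - m) + 1`.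
-/

open Filter MeasureTheory Set
open scoped NNReal Topology

noncomputable def negSign (y : ℝ) : ℝ := if y < 0 then -1 else 0

theorem negSign_of_neg {y : ℝ} (hy : y < 0) : negSign y = -1 := if_pos hy

theorem negSign_of_nonneg {y : ℝ} (hy : 0 ≤ y) : negSign y = 0 := if_neg hy.not_gt

theorem negSign_nonpos (y : ℝ) : negSign y ≤ 0 := by
  unfold negSign; split_ifs <;> norm_num

theorem norm_negSign_le_one (y : ℝ) : ‖negSign y‖ ≤ 1 := by
  unfold negSign; split_ifs <;> norm_num

theorem measurable_negSign : Measurable negSign :=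
  Measurable.ite measurableSet_Iio measurable_const measurable_const

theorem Continuous.locallyIntegrable_negSign_comp {φ : ℝ → ℝ} (hφ : Continuous φ) :
    LocallyIntegrable (fun s => negSign (φ s)) :=
  (locallyIntegrable_const (1 : ℝ)).mono
    (measurable_negSign.comp hφ.measurable).aestronglyMeasurable
    (ae_of_all _ fun s => by simpa using norm_negSign_le_one (φ s))

theorem SimpleGraph.Preconnected.exists_sum_sub_neg {V : Type*} [Fintype V] {G : SimpleGraph V}
    [DecidableRel G.Adj] (hG : G.Preconnected) {f : V → ℝ} {i j : V} (hij : f i ≠ f j) :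
    ∃ a, ∑ b ∈ G.neighborFinset a, (f b - f a) < 0 := by
  have : Nonempty V := ⟨i⟩
  obtain ⟨a₀, ha₀⟩ := Finite.exists_max f
  obtain ⟨k, hk⟩ : ∃ k, f k ≠ f a₀ := by
    by_contra! h
    exact hij ((h i).trans (h j).symm)
  obtain ⟨d, -, hd_max, hd_lt⟩ := (hG a₀ k).some.exists_boundary_dart {a | f a = f a₀} rfl hk
  refine ⟨d.fst, Finset.sum_neg' (fun b _ => ?_) ⟨d.snd, ?_, ?_⟩⟩
  · simpa [hd_max.out] using ha₀ b
  · simp [d.adj]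
  · simpa [hd_max.out] using lt_of_le_of_ne (ha₀ d.snd) hd_lt

theorem LipschitzOnWith.finset_inf' {α ι : Type*} [PseudoMetricSpace α] {s : Finset ι}
    (hs : s.Nonempty) {f : ι → α → ℝ} {K : ℝ≥0} {S : Set α}
    (hf : ∀ i ∈ s, LipschitzOnWith K (f i) S) :
    LipschitzOnWith K (fun x => s.inf' hs fun i => f i x) S := by
  refine LipschitzOnWith.of_le_add_mul K fun x hx y hy => ?_
  obtain ⟨i, hi, hyi⟩ := s.exists_mem_eq_inf' hs fun i => f i y
  rw [hyi]
  exact (s.inf'_le _ hi).trans ((hf i hi).le_add_mul hx hy)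

theorem HasDerivAt.of_eventually_le_of_eq {f g : ℝ → ℝ} {f' t : ℝ} (hf : HasDerivAt f f' t)
    (hg : DifferentiableAt ℝ g t) (hle : ∀ᶠ s in 𝓝 t, g s ≤ f s) (heq : g t = f t) :
    HasDerivAt g f' t := by
  have hmin : IsLocalMin (f - g) t := hle.mono fun s hs => by simpa [heq] using hs
  have := hmin.hasDerivAt_eq_zero (hf.sub hg.hasDerivAt)
  rw [sub_eq_zero.1 this]
  exact hg.hasDerivAt

theorem Finset.inf'_eq_of_ae_hasDerivAt_zero {ι : Type*} {s : Finset ι} (hs : s.Nonempty)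
    {f : ι → ℝ → ℝ} {K : ℝ≥0} {a b : ℝ} (hf : ∀ i ∈ s, LipschitzOnWith K (f i) (Set.uIcc a b))
    (hderiv : ∀ᵐ t, t ∈ Set.uIcc a b →
      ∀ i ∈ s, f i t = s.inf' hs (fun j => f j t) → HasDerivAt (f i) 0 t) :
    s.inf' hs (fun i => f i b) = s.inf' hs (fun i => f i a) := by
  have hac := (LipschitzOnWith.finset_inf' hs hf).absolutelyContinuousOnInterval
  obtain ⟨C, hC⟩ := hac.const_of_ae_hasDerivAt_zero <| by
    filter_upwards [hac.ae_differentiableAt, hderiv] with t hdiff hderiv ht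
    obtain ⟨i, hi, hti⟩ := s.exists_mem_eq_inf' hs fun j => f j t
    exact (hderiv ht i hi hti.symm).of_eventually_le_of_eq (hdiff ht)
      (Eventually.of_forall fun r => s.inf'_le _ hi) hti
  exact (hC b Set.right_mem_uIcc).trans (hC a Set.left_mem_uIcc).symm

theorem MeasureTheory.LocallyIntegrable.intervalIntegrable {f : ℝ → ℝ} (hf : LocallyIntegrable f)
    (a b : ℝ) : IntervalIntegrable f volume a b :=
  (hf.integrableOn_isCompact isCompact_uIcc).intervalIntegrable

section IntegralEquation

variable {f u : ℝ → ℝ}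

theorem sub_eq_integral_of_forall_eq_add_integral
    (hf : ∀ t, 0 ≤ t → f t = f 0 + ∫ r in 0..t, u r) (hu : LocallyIntegrable u)
    {s t : ℝ} (hs : 0 ≤ s) (ht : 0 ≤ t) : f t - f s = ∫ r in s..t, u r := by
  rw [hf t ht, hf s hs, add_sub_add_left_eq_sub,
    intervalIntegral.integral_interval_sub_left (hu.intervalIntegrable _ _)
      (hu.intervalIntegrable _ _)]

theorem lipschitzOnWith_of_forall_eq_add_integral
    (hf : ∀ t, 0 ≤ t → f t = f 0 + ∫ r in 0..t, u r) (hu : LocallyIntegrable u)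
    {K : ℝ≥0} (hK : ∀ r, ‖u r‖ ≤ K) : LipschitzOnWith K f (Ici 0) :=
  LipschitzOnWith.of_dist_le_mul fun t ht s hs => by
    rw [Real.dist_eq, ← Real.norm_eq_abs, sub_eq_integral_of_forall_eq_add_integral hf hu hs ht,
      Real.dist_eq]
    exact intervalIntegral.norm_integral_le_of_norm_le_const fun r _ => hK r

theorem antitoneOn_of_forall_eq_add_integral
    (hf : ∀ t, 0 ≤ t → f t = f 0 + ∫ r in 0..t, u r) (hu : LocallyIntegrable u)
    (hu_nonpos : ∀ r, u r ≤ 0) : AntitoneOn f (Ici 0) := fun s hs t ht hst => by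
  have := intervalIntegral.integral_mono_on hst (hu.intervalIntegrable s t)
    intervalIntegrable_const fun r _ => hu_nonpos r
  rw [← sub_eq_integral_of_forall_eq_add_integral hf hu hs ht] at this
  simp only [intervalIntegral.integral_zero] at this
  linarith

theorem ae_hasDerivAt_of_forall_eq_add_integral
    (hf : ∀ t, 0 ≤ t → f t = f 0 + ∫ r in 0..t, u r) (hu : LocallyIntegrable u) :
    ∀ᵐ t, 0 < t → HasDerivAt f (u t) t := by
  filter_upwards [LocallyIntegrable.ae_hasDerivAt_integral hu] with t ht ht_pos
  refine ((ht 0).const_add (f 0)).congr_of_eventuallyEq ?_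
  filter_upwards [Ioi_mem_nhds ht_pos] with r hr using hf r (le_of_lt hr)

end IntegralEquation

section Agents

variable {ι : Type*} [Fintype ι] {x : ℝ → ι → ℝ} {u : ι → ℝ → ℝ}

theorem inf'_eq_of_forall_eq_add_integral [Nonempty ι]
    (hx : ∀ i t, 0 ≤ t → x t i = x 0 i + ∫ s in 0..t, u i s)
    (hu : ∀ i, LocallyIntegrable (u i)) {K : ℝ≥0} (hK : ∀ i s, ‖u i s‖ ≤ K)
    (hzero : ∀ i s, x s i = Finset.univ.inf' Finset.univ_nonempty (x s) → u i s = 0)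
    {t : ℝ} (ht : 0 ≤ t) :
    Finset.univ.inf' Finset.univ_nonempty (x t) = Finset.univ.inf' Finset.univ_nonempty (x 0) := by
  refine Finset.inf'_eq_of_ae_hasDerivAt_zero Finset.univ_nonempty (f := fun i t => x t i) (K := K)
    (fun i _ => (lipschitzOnWith_of_forall_eq_add_integral (hx i) (hu i) (hK i)).mono ?_) ?_
  · rw [uIcc_of_le ht]
    exact Icc_subset_Ici_self
  · have hderiv := ae_all_iff.2 fun i => ae_hasDerivAt_of_forall_eq_add_integral (hx i) (hu i)
    filter_upwards [hderiv, Measure.ae_ne volume 0] with s hs hs_ne hs_mem i _ hi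
    have hs_pos : 0 < s := lt_of_le_of_ne (uIcc_of_le ht ▸ hs_mem).1 hs_ne.symm
    simpa [hzero i s hi] using hs i hs_pos

theorem exists_forall_eq_of_forall_eq_add_integral
    (hx : ∀ i t, 0 ≤ t → x t i = x 0 i + ∫ s in 0..t, u i s)
    (hu : ∀ i, LocallyIntegrable (u i)) (hu_nonpos : ∀ i s, u i s ≤ 0) {m : ℝ}
    (hm : ∀ t, 0 ≤ t → ∀ i, m ≤ x t i)
    (hdecay : ∀ s, 0 ≤ s → (∃ i, x s i ≠ m) → ∃ i, u i s ≤ -1) :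
    ∃ T ≥ 0, ∀ t ≥ T, ∀ i, x t i = m := by
  have hanti i := antitoneOn_of_forall_eq_add_integral (hx i) (hu i) (hu_nonpos i)
  set T := ∑ i, (x 0 i - m) + 1 with hT_def
  have hT : 0 ≤ T := by
    have := Finset.sum_nonneg fun i (_ : i ∈ Finset.univ) => sub_nonneg.2 (hm 0 le_rfl i)
    positivity
  suffices hxT : ∀ i, x T i = m from ⟨T, hT, fun t ht i =>
    le_antisymm (hxT i ▸ hanti i (mem_Ici.2 hT) (mem_Ici.2 (hT.trans ht)) ht)
      (hm t (hT.trans ht) i)⟩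
  by_contra! hxT
  have hsum_rate : ∀ s ∈ Icc 0 T, ∑ i, u i s ≤ -1 := by
    rintro s ⟨hs, hsT⟩
    obtain ⟨a, ha⟩ := hdecay s hs <| by
      by_contra! hxs
      obtain ⟨i, hi⟩ := hxT
      exact hi (le_antisymm (hxs i ▸ hanti i (mem_Ici.2 hs) (mem_Ici.2 hT) hsT) (hm T hT i))
    have := Finset.single_le_sum (f := fun i => -u i s) (fun i _ => neg_nonneg.2 (hu_nonpos i s))
      (Finset.mem_univ a)
    simp only [Finset.sum_neg_distrib] at this
    linarith
  have hsum : ∑ i, (x T i - m) = ∑ i, (x 0 i - m) + ∫ s in 0..T, ∑ i, u i s := by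
    rw [intervalIntegral.integral_finsetSum fun i _ => (hu i).intervalIntegrable 0 T,
      ← Finset.sum_add_distrib]
    exact Finset.sum_congr rfl fun i _ => by rw [hx i T hT]; ring
  have hint : ∫ s in 0..T, ∑ i, u i s ≤ -T := by
    have hint := (IntervalIntegrable.sum Finset.univ fun i _ => (hu i).intervalIntegrable 0 T)
    simp only [Finset.sum_fn] at hint
    simpa using intervalIntegral.integral_mono_on hT hint intervalIntegrable_const hsum_rate
  have hlow := Finset.sum_nonneg fun i (_ : i ∈ Finset.univ) => sub_nonneg.2 (hm T hT i)
  linarith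

end Agents

/-- Proposition 3 (min-consensus in finite time): under the discontinuous
consensus dynamics with sgn₋ (in integral/Carathéodory form), all states reach
the minimum of the initial conditions in finite time. -/
theorem min_consensus_finite_time
    (M : ℕ) (hM : 1 ≤ M)
    (G : SimpleGraph (Fin M)) [DecidableRel G.Adj] (hG : G.Connected)
    (sgnNeg : ℝ → ℝ)
    (hsgn : ∀ y : ℝ, sgnNeg y = if y < 0 then -1 else 0)
    (x : ℝ → Fin M → ℝ)
    (hcont : ∀ i : Fin M, Continuous (fun t => x t i))
    (hdyn : ∀ (i : Fin M) (t : ℝ), 0 ≤ t →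
      x t i = x 0 i + ∫ s in (0 : ℝ)..t,
        sgnNeg (∑ j ∈ G.neighborFinset i, (x s j - x s i))) :
    ∃ T ≥ (0 : ℝ), ∀ t ≥ T, ∀ i : Fin M,
      x t i = Finset.univ.inf' ⟨⟨0, by omega⟩, Finset.mem_univ _⟩ (x 0) := by
  obtain rfl : sgnNeg = negSign := funext hsgn
  have : Nonempty (Fin M) := ⟨⟨0, by omega⟩⟩
  have hu i : LocallyIntegrable fun s => negSign (∑ j ∈ G.neighborFinset i, (x s j - x s i)) :=
    (continuous_finsetSum _ fun j _ => (hcont j).sub (hcont i)).locallyIntegrable_negSign_comp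
  have hmin t (ht : 0 ≤ t) :
      Finset.univ.inf' Finset.univ_nonempty (x t) = Finset.univ.inf' Finset.univ_nonempty (x 0) :=
    inf'_eq_of_forall_eq_add_integral hdyn hu (K := 1) (fun _ _ => norm_negSign_le_one _)
      (fun i s hi => negSign_of_nonneg <| Finset.sum_nonneg fun j _ =>
        sub_nonneg.2 (hi ▸ Finset.univ.inf'_le _ (Finset.mem_univ j))) ht
  refine exists_forall_eq_of_forall_eq_add_integral hdyn hu (fun _ _ => negSign_nonpos _)
    (fun t ht i => hmin t ht ▸ Finset.univ.inf'_le _ (Finset.mem_univ i)) fun s hs ⟨i, hi⟩ => ?_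
  obtain ⟨j, -, hj⟩ := Finset.univ.exists_mem_eq_inf' Finset.univ_nonempty (x s)
  obtain ⟨a, ha⟩ := hG.preconnected.exists_sum_sub_neg (f := x s) (i := i) (j := j) <| by
    rwa [← hj, hmin s hs]
  exact ⟨a, (negSign_of_neg ha).le⟩
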